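/- Let G be a graph and Ω a potential maximal clique of G. Then every block associated with Ω is a full block of G; in particular, for every connected component C of G − Ω, the set N(C) is a minimal separator of G and N(C) is the full neighborhood of C. -/

import Mathlib

open scoped Classical

/-- Data of a (finite) tree decomposition: an index type, a graph on it, and bags. -/
structure TDData (V : Type) where
  ι : Type
  fin : Fintype ι
  tree : SimpleGraph ι
  bag : ι → Finset V

/-- `D` is a tree decomposition of the graph `G`. -/
def IsGraphTD {V : Type} (G : SimpleGraph V) (D : TDData V) : Prop :=
  D.tree.IsTree ∧
  (∀ v : V, ∃ t, v ∈ D.bag t) ∧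
  (∀ u v : V, G.Adj u v → ∃ t, u ∈ D.bag t ∧ v ∈ D.bag t) ∧
  (∀ v : V, (D.tree.induce {t | v ∈ D.bag t}).Connected)

/-- `D` is a tree decomposition of the hypergraph with edge family `E`. -/
def IsHyperTD {V : Type} (E : Finset (Finset V)) (D : TDData V) : Prop :=
  D.tree.IsTree ∧
  (∀ v : V, ∃ t, v ∈ D.bag t) ∧
  (∀ e ∈ E, ∃ t, e ⊆ D.bag t) ∧
  (∀ v : V, (D.tree.induce {t | v ∈ D.bag t}).Connected)

/-- A monotone width function. -/
def MonoWidth {V : Type} (f : Finset V → NNReal) : Prop :=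
  ∀ X Y : Finset V, X ⊆ Y → f X ≤ f Y

/-- The `f`-width of a tree decomposition: the supremum of `f` over its bags. -/
noncomputable def tdWidth {V : Type} (f : Finset V → NNReal) (D : TDData V) : NNReal :=
  ⨆ t : D.ι, f (D.bag t)

/-- The `f`-tree-width of a graph. -/
noncomputable def ftw {V : Type} (G : SimpleGraph V) (f : Finset V → NNReal) : NNReal :=
  ⨅ D : {D : TDData V // IsGraphTD G D}, tdWidth f D.1

/-- The `f`-hypertree-width of a hypergraph. -/
noncomputable def fhtw {V : Type} (E : Finset (Finset V)) (f : Finset V → NNReal) : NNReal :=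
  ⨅ D : {D : TDData V // IsHyperTD E D}, tdWidth f D.1

/-- The `f`-clique-number of a graph. -/
noncomputable def fCliqueNum {V : Type} (G : SimpleGraph V) (f : Finset V → NNReal) : NNReal :=
  ⨆ Ω : {Ω : Finset V // G.IsClique (Ω : Set V)}, f Ω.1

/-- The Gaifman (primal) graph of a hypergraph. -/
def gaifman {V : Type} (E : Finset (Finset V)) : SimpleGraph V :=
  SimpleGraph.fromRel fun u v => ∃ e ∈ E, u ∈ e ∧ v ∈ e

/-- A graph is chordal if every cycle of length at least 4 has a chord. -/
def IsChordal {V : Type} (G : SimpleGraph V) : Prop :=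
  ∀ (v : V) (p : G.Walk v v), p.IsCycle → 4 ≤ p.length →
    ∃ u w : V, u ∈ p.support ∧ w ∈ p.support ∧ G.Adj u w ∧ s(u, w) ∉ p.edges

/-- `I` is a triangulation of `G`: a chordal supergraph on the same vertex set. -/
def IsTriangulation {V : Type} (G I : SimpleGraph V) : Prop :=
  G ≤ I ∧ IsChordal I

/-- `I` is a minimal triangulation of `G`. -/
def IsMinTriang {V : Type} (G I : SimpleGraph V) : Prop :=
  IsTriangulation G I ∧ ∀ I' : SimpleGraph V, IsTriangulation G I' → I' ≤ I → I' = I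

/-- A maximal clique of `G` (as a finset). -/
def IsMaxClique {V : Type} (G : SimpleGraph V) (Ω : Finset V) : Prop :=
  G.IsClique (Ω : Set V) ∧ ∀ Ω' : Finset V, G.IsClique (Ω' : Set V) → Ω ⊆ Ω' → Ω = Ω'

/-- A potential maximal clique: a maximal clique of some minimal triangulation. -/
def IsPMC {V : Type} (G : SimpleGraph V) (Ω : Finset V) : Prop :=
  ∃ I : SimpleGraph V, IsMinTriang G I ∧ IsMaxClique I Ω

/-- `u` and `v` are joined by a walk avoiding `S`. -/
def ReachAvoid {V : Type} (G : SimpleGraph V) (S : Finset V) (u v : V) : Prop :=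
  ∃ p : G.Walk u v, ∀ x ∈ p.support, x ∉ S

/-- `S` is a `u,v`-separator of `G`. -/
def IsUVSep {V : Type} (G : SimpleGraph V) (u v : V) (S : Finset V) : Prop :=
  u ∉ S ∧ v ∉ S ∧ ¬ ReachAvoid G S u v

/-- `S` is a minimal separator of `G`: a minimal `u,v`-separator for some
non-adjacent pair of distinct vertices `u,v`. -/
def IsMinSep {V : Type} (G : SimpleGraph V) (S : Finset V) : Prop :=
  ∃ u v : V, u ≠ v ∧ ¬ G.Adj u v ∧ IsUVSep G u v S ∧ ∀ S' ⊂ S, ¬ IsUVSep G u v S'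

/-- An inclusion-minimal separator: a minimal separator not properly containing
another minimal separator. -/
def IsInclMinSep {V : Type} (G : SimpleGraph V) (S : Finset V) : Prop :=
  IsMinSep G S ∧ ∀ S' : Finset V, IsMinSep G S' → S' ⊆ S → S' = S

/-- `C` is (the vertex set of) a connected component of `G - S`. -/
def IsCompAvoid {V : Type} (G : SimpleGraph V) (S C : Finset V) : Prop :=
  C.Nonempty ∧ (∀ x ∈ C, x ∉ S) ∧
  (∀ x ∈ C, ∀ y ∈ C, ReachAvoid G S x y) ∧
  (∀ x ∈ C, ∀ y : V, y ∉ S → ReachAvoid G S x y → y ∈ C)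

/-- The neighborhood of a set `C` of vertices, as a set. -/
def nbhdSet {V : Type} (G : SimpleGraph V) (C : Finset V) : Set V :=
  {v | v ∉ C ∧ ∃ u ∈ C, G.Adj u v}

/-- The neighborhood of a set `C` of vertices, as a finset. -/
noncomputable def nbhd {V : Type} [Fintype V] [DecidableEq V]
    (G : SimpleGraph V) (C : Finset V) : Finset V :=
  Finset.univ.filter fun v => v ∉ C ∧ ∃ u ∈ C, G.Adj u v

/-- The realization `R(S,C)` of a block: the graph on `S ∪ C` induced from `G`
with `S` turned into a clique (viewed as a graph on `V` with no edges outside `S ∪ C`). -/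
def real {V : Type} [DecidableEq V] (G : SimpleGraph V) (S C : Finset V) : SimpleGraph V :=
  SimpleGraph.fromRel fun u v =>
    (u ∈ S ∪ C ∧ v ∈ S ∪ C) ∧ (G.Adj u v ∨ (u ∈ S ∧ v ∈ S))

/-- The subgraph of `I` induced by a finset `W`, viewed as a graph on `V`. -/
def restrict {V : Type} (I : SimpleGraph V) (W : Finset V) : SimpleGraph V :=
  SimpleGraph.fromRel fun u v => u ∈ W ∧ v ∈ W ∧ I.Adj u v

/-- `(S,C)` is a full block of `G`. -/
def FullBlock {V : Type} (G : SimpleGraph V) (S C : Finset V) : Prop :=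
  IsMinSep G S ∧ IsCompAvoid G S C ∧ nbhdSet G C = (S : Set V)

/-!
Let `H` be a minimal triangulation of `G` in which `Ω` is a maximal clique. Two facts about `H`
drive the proof. First, since `H` is chordal, a maximal clique has no full component: some
`x ∈ Ω` has no `H`-neighbour in the component of `H - Ω` containing `C`, so `x ∉ N(C)`.
Second, by minimality of `H`, any two vertices of `Ω` are joined by a `G`-walk avoiding the rest
of `Ω`; otherwise the `H`-edges across the resulting separation could be deleted, leaving a
smaller triangulation. Since `N(C) ⊆ Ω`, every `s ∈ N(C)` then reaches both `C` and `x` while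
avoiding `N(C) \ {s}`, so `N(C)` is a minimal separator of a vertex of `C` from `x`.
-/

open SimpleGraph Finset

section ReachAvoid

variable {V : Type} {G H : SimpleGraph V} {S S' : Finset V} {x y z : V}

lemma reachAvoid_refl (hx : x ∉ S) : ReachAvoid G S x x :=
  ⟨.nil, by simpa using hx⟩

lemma reachAvoid_of_adj (h : G.Adj x y) (hx : x ∉ S) (hy : y ∉ S) : ReachAvoid G S x y :=
  ⟨h.toWalk, by simp [hx, hy]⟩

lemma ReachAvoid.right_notMem (h : ReachAvoid G S x y) : y ∉ S :=
  h.choose_spec y h.choose.end_mem_support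

lemma ReachAvoid.symm (h : ReachAvoid G S x y) : ReachAvoid G S y x := by
  obtain ⟨p, hp⟩ := h
  exact ⟨p.reverse, by simpa using hp⟩

lemma ReachAvoid.trans (h₁ : ReachAvoid G S x y) (h₂ : ReachAvoid G S y z) :
    ReachAvoid G S x z := by
  obtain ⟨p, hp⟩ := h₁
  obtain ⟨q, hq⟩ := h₂
  refine ⟨p.append q, fun w hw => ?_⟩
  rcases (Walk.mem_support_append_iff _ _).mp hw with h | h
  exacts [hp w h, hq w h]

lemma ReachAvoid.of_subset (hS : S' ⊆ S) (h : ReachAvoid G S x y) : ReachAvoid G S' x y := by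
  obtain ⟨p, hp⟩ := h
  exact ⟨p, fun w hw hw' => hp w hw (hS hw')⟩

lemma ReachAvoid.mono (hGH : G ≤ H) (h : ReachAvoid G S x y) : ReachAvoid H S x y := by
  obtain ⟨p, hp⟩ := h
  exact ⟨p.mapLe hGH, by simpa using hp⟩

lemma reachAvoid_of_mem_support (p : G.Walk x y) (hp : ∀ w ∈ p.support, w ∉ S)
    (hz : z ∈ p.support) : ReachAvoid G S x z :=
  ⟨p.takeUntil z hz, fun w hw => hp w (p.support_takeUntil_subset_support hz hw)⟩

lemma isMinSep_of_reachAvoid [DecidableEq V] {u v : V} (hsep : IsUVSep G u v S)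
    (hu : ∀ s ∈ S, ReachAvoid G (S.erase s) u s)
    (hv : ∀ s ∈ S, ReachAvoid G (S.erase s) s v) :
    IsMinSep G S := by
  obtain ⟨huS, hvS, hnot⟩ := hsep
  refine ⟨u, v, fun h => hnot (h ▸ reachAvoid_refl huS),
    fun h => hnot (reachAvoid_of_adj h huS hvS), ⟨huS, hvS, hnot⟩, ?_⟩
  rintro S' hS' ⟨-, -, hnot'⟩
  obtain ⟨s, hsS, hsS'⟩ := exists_of_ssubset hS'
  have hsub : S' ⊆ S.erase s := fun w hw => mem_erase.mpr ⟨fun h => hsS' (h ▸ hw), hS'.1 hw⟩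
  exact hnot' (((hu s hsS).trans (hv s hsS)).of_subset hsub)

end ReachAvoid

section Components

variable {V : Type} [Fintype V] [DecidableEq V] {G : SimpleGraph V} {S C : Finset V}

lemma mem_nbhd {v : V} : v ∈ nbhd G C ↔ v ∉ C ∧ ∃ u ∈ C, G.Adj u v := by
  simp [nbhd]

lemma coe_nbhd : (nbhd G C : Set V) = nbhdSet G C := by
  ext v
  simp [nbhd, nbhdSet]

lemma mem_of_reachAvoid_nbhd {x y : V} (hx : x ∈ C) (h : ReachAvoid G (nbhd G C) x y) :
    y ∈ C := by
  obtain ⟨p, hp⟩ := h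
  induction p with
  | nil => exact hx
  | @cons a b c hab q ih =>
    have hb : b ∈ C := by
      by_contra hb
      exact hp b (by simp) (mem_nbhd.mpr ⟨hb, a, hx, hab⟩)
    exact ih hb fun w hw => hp w (by simp [hw])

lemma IsCompAvoid.nbhd_subset (hC : IsCompAvoid G S C) : nbhd G C ⊆ S := by
  intro v hv
  obtain ⟨hvC, u, huC, huv⟩ := mem_nbhd.mp hv
  by_contra hvS
  exact hvC (hC.2.2.2 u huC v hvS (reachAvoid_of_adj huv (hC.2.1 u huC) hvS))

lemma IsCompAvoid.of_nbhd (hC : IsCompAvoid G S C) : IsCompAvoid G (nbhd G C) C :=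
  ⟨hC.1, fun _ hx h => (mem_nbhd.mp h).1 hx,
    fun x hx y hy => (hC.2.2.1 x hx y hy).of_subset hC.nbhd_subset,
    fun _ hx _ _ h => mem_of_reachAvoid_nbhd hx h⟩

end Components

namespace SimpleGraph.Walk

variable {V : Type} {G : SimpleGraph V} {u v w x y : V}

lemma mk_mem_edges_of_length_eq_one : ∀ {p : G.Walk u v}, p.length = 1 → s(u, v) ∈ p.edges
  | .nil, h => by simp at h
  | .cons _ .nil, _ => by simp
  | .cons _ (.cons _ _), h => by simp at h

lemma two_le_length_of_mem_support {p : G.Walk u v} (hw : w ∈ p.support) (hwu : w ≠ u)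
    (hwv : w ≠ v) : 2 ≤ p.length := by
  have hsplit := congrArg length (p.take_spec hw)
  have htake : (p.takeUntil w hw).length ≠ 0 := fun h => hwu (eq_of_length_eq_zero h).symm
  have hdrop : (p.dropUntil w hw).length ≠ 0 := fun h => hwv (eq_of_length_eq_zero h)
  rw [length_append] at hsplit
  omega

lemma mem_support_dropUntil_or {p : G.Walk u v} (hx : x ∈ p.support) (hy : y ∈ p.support)
    (hxy : x ≠ y) : y ∈ (p.dropUntil x hx).support ∨ x ∈ (p.dropUntil y hy).support := by
  by_contra! h
  have hyx : y ∈ (p.takeUntil x hx).support := by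
    have := hy
    rw [← p.take_spec hx, mem_support_append_iff] at this
    exact this.resolve_right h.1
  have hxy' : x ∈ (p.takeUntil y hy).support := by
    have := hx
    rw [← p.take_spec hy, mem_support_append_iff] at this
    exact this.resolve_right h.2
  exact notMem_support_takeUntil_support_takeUntil_subset hxy.symm hx hyx hxy'

/-- A chord `xy`, with `y` after `x`, would shortcut `p` inside its own support. -/
lemma isChordless_of_forall_length_le {p : G.Walk u v}
    (hmin : ∀ q : G.Walk u v, q.support ⊆ p.support → p.length ≤ q.length) :
    p.IsChordless := by
  rw [isChordless_iff_forall_mem_edges]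
  suffices h : ∀ x y (hx : x ∈ p.support), y ∈ (p.dropUntil x hx).support → G.Adj x y →
      s(x, y) ∈ p.edges by
    intro x y hx hy hxy
    rcases mem_support_dropUntil_or hx hy hxy.ne with h' | h'
    · exact h x y hx h' hxy
    · rw [Sym2.eq_swap]
      exact h y x hy h' hxy.symm
  intro x y hx hy hxy
  by_contra he
  set q := p.dropUntil x hx
  have h0 : (q.takeUntil y hy).length ≠ 0 := fun h => hxy.ne (eq_of_length_eq_zero h)
  have h1 : (q.takeUntil y hy).length ≠ 1 := fun h => he <| p.edges_dropUntil_subset_edges hx <|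
    q.edges_takeUntil_subset_edges hy (mk_mem_edges_of_length_eq_one h)
  have hshort := hmin ((p.takeUntil x hx).append (cons hxy (q.dropUntil y hy))) <| by
    intro w hw
    rcases (mem_support_append_iff _ _).mp hw with hw | hw
    · exact p.support_takeUntil_subset_support hx hw
    · rcases List.mem_cons.mp (support_cons _ _ ▸ hw) with rfl | hw
      · exact hx
      · exact p.support_dropUntil_subset_support hx (q.support_dropUntil_subset_support hy hw)
  have hp : (p.takeUntil x hx).length + q.length = p.length := by
    simpa only [length_append] using congrArg length (p.take_spec hx)
  have hq := congrArg length (q.take_spec hy)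
  simp only [length_append, length_cons] at hq hshort
  omega

lemma exists_isPath_isChordless (p : G.Walk u v) :
    ∃ q : G.Walk u v, q.IsPath ∧ q.IsChordless ∧ q.support ⊆ p.support := by
  have hex : ∃ n, ∃ q : G.Walk u v, q.support ⊆ p.support ∧ q.length = n :=
    ⟨_, p, List.Subset.refl _, rfl⟩
  obtain ⟨q, hqp, hq⟩ := Nat.find_spec hex
  have hmin : ∀ r : G.Walk u v, r.support ⊆ p.support → q.length ≤ r.length :=
    fun r hr => hq ▸ Nat.find_min' hex ⟨r, hr, rfl⟩
  have hbypass : q.bypass = q := q.bypass_eq_self_of_length_le_length_bypass <|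
    hmin _ (List.Subset.trans q.support_bypass_subset_support hqp)
  exact ⟨q, hbypass ▸ q.bypass_isPath,
    isChordless_of_forall_length_le fun r hr => hmin r (List.Subset.trans hr hqp), hqp⟩

lemma IsPath.eq_of_mem_support_append {p : G.Walk u v} {q : G.Walk v w}
    (hpq : (p.append q).IsPath) (hp : x ∈ p.support) (hq : x ∈ q.support) : x = v := by
  by_contra h
  exact hpq.ne_of_mem_support_of_append h hp hq rfl

lemma IsChordless.of_append_left {p : G.Walk u v} {q : G.Walk v w} (hpq : (p.append q).IsPath)
    (h : (p.append q).IsChordless) : p.IsChordless := by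
  rw [isChordless_iff_forall_mem_edges] at h ⊢
  intro x y hx hy hxy
  have he := h (p.support_subset_support_append_left q hx)
    (p.support_subset_support_append_left q hy) hxy
  rw [edges_append, List.mem_append] at he
  refine he.resolve_right fun he => hxy.ne ?_
  rw [hpq.eq_of_mem_support_append hx (q.fst_mem_support_of_mem_edges he),
    hpq.eq_of_mem_support_append hy (q.snd_mem_support_of_mem_edges he)]

lemma IsChordless.of_append_right {p : G.Walk u v} {q : G.Walk v w} (hpq : (p.append q).IsPath)
    (h : (p.append q).IsChordless) : q.IsChordless := by
  rw [isChordless_iff_forall_mem_edges] at h ⊢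
  intro x y hx hy hxy
  have he := h (p.support_subset_support_append_right q hx)
    (p.support_subset_support_append_right q hy) hxy
  rw [edges_append, List.mem_append] at he
  refine he.resolve_left fun he => hxy.ne ?_
  rw [hpq.eq_of_mem_support_append (p.fst_mem_support_of_mem_edges he) hx,
    hpq.eq_of_mem_support_append (p.snd_mem_support_of_mem_edges he) hy]

lemma IsChordless.takeUntil {p : G.Walk u v} (hp : p.IsPath) (h : p.IsChordless)
    (hw : w ∈ p.support) : (p.takeUntil w hw).IsChordless := by
  rw [← p.take_spec hw] at hp h
  exact h.of_append_left hp

lemma IsChordless.dropUntil {p : G.Walk u v} (hp : p.IsPath) (h : p.IsChordless)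
    (hw : w ∈ p.support) : (p.dropUntil w hw).IsChordless := by
  rw [← p.take_spec hw] at hp h
  exact h.of_append_right hp

lemma IsCycle.eq_or_eq_of_mem_support_append
    {p : G.Walk u v} {q : G.Walk v u} (hc : (p.append q).IsCycle) (hp : w ∈ p.support)
    (hq : w ∈ q.support) : w = u ∨ w = v := by
  by_contra! hw
  have h := hc.support_nodup
  rw [tail_support_append] at h
  exact List.disjoint_of_nodup_append h ((p.mem_support_iff.mp hp).resolve_left hw.1)
    ((q.mem_support_iff.mp hq).resolve_left hw.2)

end SimpleGraph.Walk

def SimpleGraph.deleteEdgesBetween {V : Type} (H : SimpleGraph V) (A B : Set V) :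
    SimpleGraph V where
  Adj x y := H.Adj x y ∧ ¬(x ∈ A ∧ y ∈ B) ∧ ¬(x ∈ B ∧ y ∈ A)
  symm := ⟨fun _ _ h => ⟨h.1.symm, fun hc => h.2.2 hc.symm, fun hc => h.2.1 hc.symm⟩⟩
  loopless := ⟨fun x h => H.loopless.irrefl x h.1⟩

section DeleteEdgesBetween

variable {V : Type} {H : SimpleGraph V} {A B : Set V}

lemma SimpleGraph.deleteEdgesBetween_le : H.deleteEdgesBetween A B ≤ H := fun _ _ h => h.1

lemma SimpleGraph.Walk.exists_mem_support_notMem_of_deleteEdgesBetween (hAB : Disjoint A B)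
    {a b : V} (p : (H.deleteEdgesBetween A B).Walk a b) (ha : a ∈ A) (hb : b ∈ B) :
    ∃ w ∈ p.support, w ∉ A ∧ w ∉ B := by
  induction p with
  | nil => exact absurd hb (Set.disjoint_left.mp hAB ha)
  | @cons a c b hac q ih =>
    by_cases hcA : c ∈ A
    · obtain ⟨w, hw, hwA, hwB⟩ := ih hcA hb
      exact ⟨w, by simp [hw], hwA, hwB⟩
    by_cases hcB : c ∈ B
    · exact absurd ⟨ha, hcB⟩ hac.2.1
    · exact ⟨c, by simp, hcA, hcB⟩

/-- The two arcs of a cycle between `a ∈ A` and `b ∈ B` both pass through the clique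
`(A ∪ B)ᶜ`; the two crossing vertices give the chord. -/
lemma exists_chord_of_isCycle_deleteEdgesBetween (hAB : Disjoint A B)
    (hW : H.IsClique (A ∪ B)ᶜ) {v a b : V} {c : (H.deleteEdgesBetween A B).Walk v v}
    (hc : c.IsCycle) (ha : a ∈ c.support) (haA : a ∈ A) (hb : b ∈ c.support) (hbB : b ∈ B) :
    ∃ x y, x ∈ c.support ∧ y ∈ c.support ∧ (H.deleteEdgesBetween A B).Adj x y ∧
      s(x, y) ∉ c.edges := by
  set c' := c.rotate a ha
  have hb' : b ∈ c'.support := (c.mem_support_rotate_iff a ha).mpr hb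
  have hc' : ((c'.takeUntil b hb').append (c'.dropUntil b hb')).IsCycle := by
    rw [c'.take_spec hb']
    exact hc.rotate ha
  have hboth : ∀ w, w ∉ A → w ∉ B → w ∈ (c'.takeUntil b hb').support →
      w ∉ (c'.dropUntil b hb').support := by
    intro w hwA hwB h₁ h₂
    rcases hc'.eq_or_eq_of_mem_support_append h₁ h₂ with rfl | rfl
    exacts [hwA haA, hwB hbB]
  obtain ⟨x, hx, hxA, hxB⟩ :=
    (c'.takeUntil b hb').exists_mem_support_notMem_of_deleteEdgesBetween hAB haA hbB
  obtain ⟨y, hy, hyA, hyB⟩ :=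
    (c'.dropUntil b hb').reverse.exists_mem_support_notMem_of_deleteEdgesBetween hAB haA hbB
  rw [Walk.support_reverse, List.mem_reverse] at hy
  have hxy : x ≠ y := fun h => hboth x hxA hxB hx (h ▸ hy)
  refine ⟨x, y, ?_, ?_, ⟨hW (by simp [hxA, hxB]) (by simp [hyA, hyB]) hxy, ?_, ?_⟩, ?_⟩
  · exact (c.mem_support_rotate_iff a ha).mp (c'.support_takeUntil_subset_support hb' hx)
  · exact (c.mem_support_rotate_iff a ha).mp (c'.support_dropUntil_subset_support hb' hy)
  · exact fun h => hxA h.1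
  · exact fun h => hxB h.1
  · intro he
    have he' : s(x, y) ∈ c'.edges := (c.rotate_edges a ha).mem_iff.mpr he
    rw [← c'.take_spec hb', Walk.edges_append, List.mem_append] at he'
    rcases he' with h | h
    · exact hboth y hyA hyB (Walk.snd_mem_support_of_mem_edges _ h) hy
    · exact hboth x hxA hxB hx (Walk.fst_mem_support_of_mem_edges _ h)

lemma IsChordal.deleteEdgesBetween (hH : IsChordal H) (hAB : Disjoint A B)
    (hW : H.IsClique (A ∪ B)ᶜ) : IsChordal (H.deleteEdgesBetween A B) := by
  intro v c hc hlen
  by_cases hmeet : (∃ a ∈ c.support, a ∈ A) ∧ ∃ b ∈ c.support, b ∈ B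
  · obtain ⟨⟨a, ha, haA⟩, b, hb, hbB⟩ := hmeet
    exact exists_chord_of_isCycle_deleteEdgesBetween hAB hW hc ha haA hb hbB
  · have hle : H.deleteEdgesBetween A B ≤ H := deleteEdgesBetween_le
    obtain ⟨x, y, hx, hy, hxy, he⟩ :=
      hH v (c.mapLe hle) ((Walk.isCycle_mapLe hle).mpr hc) (by simpa using hlen)
    simp only [Walk.support_mapLe_eq_support, Walk.edges_mapLe_eq_edges] at hx hy he
    exact ⟨x, y, hx, hy, ⟨hxy, fun h => hmeet ⟨⟨x, hx, h.1⟩, y, hy, h.2⟩,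
      fun h => hmeet ⟨⟨y, hy, h.2⟩, x, hx, h.1⟩⟩, he⟩

end DeleteEdgesBetween

lemma IsMinTriang.reachAvoid_of_isClique {V : Type} [DecidableEq V] {G H : SimpleGraph V}
    (hH : IsMinTriang G H) {Ω : Finset V} (hΩ : H.IsClique (Ω : Set V)) {u v : V}
    (hu : u ∈ Ω) (hv : v ∈ Ω) (huv : u ≠ v) : ReachAvoid G (Ω \ {u, v}) u v := by
  by_contra hsep
  set W := Ω \ {u, v}
  set A : Set V := {x | ReachAvoid G W u x}
  set B : Set V := {x | x ∉ W ∧ ¬ReachAvoid G W u x}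
  have hAB : Disjoint A B := Set.disjoint_left.mpr fun _ hA hB => hB.2 hA
  have hW : H.IsClique (A ∪ B)ᶜ := by
    refine hΩ.subset fun x hx => ?_
    simp only [Set.mem_compl_iff, Set.mem_union, not_or] at hx
    by_contra hxW
    exact hx.2 ⟨fun h => hxW (mem_sdiff.mp h).1, hx.1⟩
  have hGK : G ≤ H.deleteEdgesBetween A B := by
    have hclosed : ∀ {x y}, G.Adj x y → x ∈ A → y ∉ B := fun hxy hx hy =>
      hy.2 (ReachAvoid.trans hx (reachAvoid_of_adj hxy hx.right_notMem hy.1))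
    exact fun x y hxy => ⟨hH.1.1 hxy, fun h => hclosed hxy h.1 h.2,
      fun h => hclosed hxy.symm h.2 h.1⟩
  have hK := hH.2 _ ⟨hGK, hH.1.2.deleteEdgesBetween hAB hW⟩ deleteEdgesBetween_le
  have huvH : H.Adj u v := hΩ hu hv huv
  rw [← hK] at huvH
  exact huvH.2.1 ⟨reachAvoid_refl (by simp [W]), by simp [W], hsep⟩

section Chordal

open Walk

variable {V : Type} {H : SimpleGraph V}

/-- Otherwise `z`, `a`, the path and `b` would form a chordless cycle of length at least four. -/
lemma IsChordal.exists_adj_of_isChordless (hH : IsChordal H) {a b z : V} {p : H.Walk a b}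
    (hp : p.IsPath) (hc : p.IsChordless) (hlen : 2 ≤ p.length) (hz : z ∉ p.support)
    (hza : H.Adj z a) (hzb : H.Adj z b) :
    ∃ w ∈ p.support, w ≠ a ∧ w ≠ b ∧ H.Adj z w := by
  by_contra! hno
  have hab : a ≠ b := by
    rintro rfl
    have := length_eq_zero_iff.mpr (isPath_iff_nil.mp hp)
    omega
  have hcyc : (cons hza (p.concat hzb.symm)).IsCycle := by
    refine (cons_isCycle_iff _ _).mpr ⟨hp.concat hz _, fun he => ?_⟩
    rw [edges_concat, List.concat_eq_append, List.mem_append, List.mem_singleton] at he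
    rcases he with he | he
    · exact hz (p.fst_mem_support_of_mem_edges he)
    · rw [Sym2.eq_iff] at he
      rcases he with ⟨rfl, -⟩ | ⟨-, rfl⟩
      exacts [hz p.end_mem_support, hab rfl]
  have hlen' : 4 ≤ (cons hza (p.concat hzb.symm)).length := by
    simp only [length_cons, length_concat]
    omega
  obtain ⟨x, y, hx, hy, hxy, he⟩ := hH z _ hcyc hlen'
  simp only [support_cons, support_concat, List.mem_cons, List.mem_append, List.not_mem_nil,
    or_false] at hx hy
  simp only [edges_cons, edges_concat, List.concat_eq_append, List.mem_cons, List.mem_append,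
    List.not_mem_nil, or_false, not_or] at he
  rw [isChordless_iff_forall_mem_edges] at hc
  have hzw : ∀ w ∈ p.support, H.Adj z w → w = a ∨ w = b := fun w hw hzw => by
    by_contra! h
    exact hno w hw h.1 h.2 hzw
  rcases hx with rfl | hx | rfl <;> rcases hy with rfl | hy | rfl
  all_goals first
    | exact H.loopless.irrefl _ hxy
    | exact he.2.1 (hc hx hy hxy)
    | (rcases hzw _ hy hxy with rfl | rfl <;> simp_all [Sym2.eq_swap])
    | (rcases hzw _ hx hxy.symm with rfl | rfl <;> simp_all [Sym2.eq_swap])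

lemma IsChordal.adj_of_isChordless (hH : IsChordal H) {a b z : V} {p : H.Walk a b}
    (hp : p.IsPath) (hc : p.IsChordless) (hz : z ∉ p.support) (hza : H.Adj z a)
    (hzb : H.Adj z b) : ∀ w ∈ p.support, H.Adj z w := by
  induction hn : p.length using Nat.strong_induction_on generalizing a b p with
  | _ n ih =>
  intro w hw
  by_cases hwab : w = a ∨ w = b
  · rcases hwab with rfl | rfl
    exacts [hza, hzb]
  push Not at hwab
  obtain ⟨w', hw', hw'a, hw'b, hzw'⟩ := hH.exists_adj_of_isChordless hp hc
    (two_le_length_of_mem_support hw hwab.1 hwab.2) hz hza hzb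
  rw [← p.take_spec hw', mem_support_append_iff] at hw
  rcases hw with hw | hw
  · exact ih _ (hn ▸ length_takeUntil_lt_length hw' hw'b) (hp.takeUntil hw')
      (hc.takeUntil hp hw') (fun h => hz (p.support_takeUntil_subset_support hw' h)) hza hzw' rfl
      w hw
  · exact ih _ (hn ▸ length_dropUntil_lt_length hw' hw'a) (hp.dropUntil hw')
      (hc.dropUntil hp hw') (fun h => hz (p.support_dropUntil_subset_support hw' h)) hzw' hzb rfl
      w hw

/-- Take `c` in the component with the most neighbours in `Ω`, and suppose it misses `s ∈ Ω`.
Along a chordless path `s, v, …, c` through the component, some `s' ∈ Ω` sees `c` but not `v`;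
since `s'` also sees `s`, this contradicts `IsChordal.adj_of_isChordless`. -/
lemma IsChordal.exists_adj_forall_of_forall_exists_adj [Fintype V] (hH : IsChordal H)
    {Ω : Finset V} (hΩ : H.IsClique (Ω : Set V)) {c₀ : V} (hc₀ : c₀ ∉ Ω)
    (hfull : ∀ s ∈ Ω, ∃ y, ReachAvoid H Ω c₀ y ∧ H.Adj y s) :
    ∃ c, ReachAvoid H Ω c₀ c ∧ ∀ s ∈ Ω, H.Adj c s := by
  obtain ⟨c, hc, hcmax⟩ := (univ.filter (ReachAvoid H Ω c₀)).exists_max_image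
    (fun y => #(Ω.filter (H.Adj y))) ⟨c₀, by simpa using reachAvoid_refl hc₀⟩
  simp only [mem_filter, mem_univ, true_and] at hc hcmax
  refine ⟨c, hc, fun s hs => ?_⟩
  by_contra hcs
  obtain ⟨y, hy, hys⟩ := hfull s hs
  obtain ⟨q, hq⟩ := hy.symm.trans hc
  obtain ⟨P, hP, hPc, hPq⟩ := (cons hys.symm q).exists_isPath_isChordless
  have hPR : ∀ w ∈ P.support, w = s ∨ ReachAvoid H Ω c₀ w := by
    intro w hw
    rcases List.mem_cons.mp (hPq hw) with h | h
    · exact .inl h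
    · exact .inr (hy.trans (reachAvoid_of_mem_support q hq h))
  have hPnil : ¬P.Nil := fun h => hc.right_notMem (h.eq ▸ hs)
  have hsv : H.Adj s P.snd := P.adj_snd hPnil
  have hv : ReachAvoid H Ω c₀ P.snd := (hPR _ (P.getVert_mem_support 1)).resolve_left hsv.ne.symm
  obtain ⟨s', hs', hcs', hvs'⟩ : ∃ s' ∈ Ω, H.Adj c s' ∧ ¬H.Adj P.snd s' := by
    by_contra! h
    have hsub : insert s (Ω.filter (H.Adj c)) ⊆ Ω.filter (H.Adj P.snd) := by
      intro t ht
      rcases mem_insert.mp ht with rfl | ht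
      · exact mem_filter.mpr ⟨hs, hsv.symm⟩
      · obtain ⟨htΩ, hct⟩ := mem_filter.mp ht
        exact mem_filter.mpr ⟨htΩ, h t htΩ hct⟩
    have hcard := card_le_card hsub
    rw [card_insert_of_notMem fun h => hcs (mem_filter.mp h).2] at hcard
    have := hcmax _ hv
    omega
  have hs's : s' ≠ s := fun h => hcs (h ▸ hcs')
  have hs'P : s' ∉ P.support := fun h =>
    (hPR s' h).elim hs's fun h => h.right_notMem hs'
  exact hvs' (hH.adj_of_isChordless hP hPc hs'P (hΩ hs' hs hs's) hcs'.symm _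
    (P.getVert_mem_support 1)).symm

lemma IsMaxClique.exists_forall_not_adj [Fintype V] {Ω : Finset V} (hΩ : IsMaxClique H Ω)
    (hH : IsChordal H) {c₀ : V} (hc₀ : c₀ ∉ Ω) :
    ∃ s ∈ Ω, ∀ y, ReachAvoid H Ω c₀ y → ¬H.Adj y s := by
  by_contra! hfull
  obtain ⟨c, hc, hcΩ⟩ := hH.exists_adj_forall_of_forall_exists_adj hΩ.1 hc₀ hfull
  have hins : H.IsClique ((insert c Ω : Finset V) : Set V) := by
    rw [coe_insert]
    exact hΩ.1.insert fun s hs _ => hcΩ s hs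
  exact hc.right_notMem (hΩ.2 _ hins (subset_insert c Ω) ▸ mem_insert_self c Ω)

end Chordal

theorem stmt13_general {V : Type} [Fintype V] [DecidableEq V] (G : SimpleGraph V)
    (Omega : Finset V) (hOmega : IsPMC G Omega)
    (C : Finset V) (hC : IsCompAvoid G Omega C) :
    IsMinSep G (nbhd G C) ∧ IsCompAvoid G (nbhd G C) C ∧
      nbhdSet G C = (nbhd G C : Set V) := by
  obtain ⟨H, hH, hΩ⟩ := hOmega
  obtain ⟨c, hc⟩ := hC.1
  have hCN : IsCompAvoid G (nbhd G C) C := hC.of_nbhd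
  obtain ⟨x, hxΩ, hx⟩ := hΩ.exists_forall_not_adj hH.1.2 (hC.2.1 c hc)
  have hxN : x ∉ nbhd G C := fun h => by
    obtain ⟨-, u, hu, hux⟩ := mem_nbhd.mp h
    exact hx u ((hC.2.2.1 c hc u hu).mono hH.1.1) (hH.1.1 hux)
  have hsep : IsUVSep G c x (nbhd G C) :=
    ⟨hCN.2.1 c hc, hxN, fun h => hC.2.1 x (hCN.2.2.2 c hc x hxN h) hxΩ⟩
  refine ⟨isMinSep_of_reachAvoid hsep (fun s hs => ?_) (fun s hs => ?_), hCN, coe_nbhd.symm⟩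
  · obtain ⟨-, u, hu, hus⟩ := mem_nbhd.mp hs
    exact ((hCN.2.2.1 c hc u hu).of_subset (erase_subset s _)).trans
      (reachAvoid_of_adj hus (fun h => hCN.2.1 u hu (mem_of_mem_erase h)) (notMem_erase s _))
  · refine (hH.reachAvoid_of_isClique hΩ.1 (hC.nbhd_subset hs) hxΩ
      fun h => hxN (h ▸ hs)).of_subset fun w hw => ?_
    obtain ⟨hws, hwN⟩ := mem_erase.mp hw
    simp only [mem_sdiff, mem_insert, mem_singleton, not_or]
    exact ⟨hC.nbhd_subset hwN, hws, fun h => hxN (h ▸ hwN)⟩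

/-- every block associated with a potential maximal clique `Ω`
of a (connected) graph `G` is a full block: for every component `C` of `G - Ω`,
the set `N(C)` is a minimal separator of `G` and `C` is a full component of
`G - N(C)`.  (Connectivity is the standing assumption of the cited source.) -/
theorem stmt13 {V : Type} [Fintype V] [DecidableEq V] (G : SimpleGraph V)
    (hconn : G.Connected) (Omega : Finset V) (hOmega : IsPMC G Omega)
    (C : Finset V) (hC : IsCompAvoid G Omega C) :
    IsMinSep G (nbhd G C) ∧ IsCompAvoid G (nbhd G C) C ∧
      nbhdSet G C = (nbhd G C : Set V) :=
  stmt13_general G Omega hOmega C hC
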